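/- Let m ≥ 1 and let ℑ : {1,…,m} → {1,…,n−1} be a map with ℑ(k) ≠ ℑ(k+1) for 1 ≤ k ≤ m−1. Define ι_1 = λ_{ℑ(1)} + 1 and, recursively, ι_k = λ_{ℑ(k)} + 1 − Σ_{p=1}^{k−1} a_{ℑ(k),ℑ(p)} ι_p for k > 1, where a_{l,i} is the (l,i) entry of the Cartan matrix of sl(n) (a_{l,l} = 2, a_{l,i} = −1 if |l−i| = 1, a_{l,i} = 0 otherwise). Assume every ι_k is a nonnegative integer, and set η[ℑ] = η_{ℑ(m)}^{ι_m} ∘ η_{ℑ(m−1)}^{ι_{m−1}} ∘ ⋯ ∘ η_{ℑ(1)}^{ι_1} applied to the constant polynomial 1. Then η[ℑ] ∈ A satisfies d_j(η[ℑ]) = 0 for every j = 1,…,n−1; moreover η[ℑ] is weighted: ζ_j(η[ℑ]) = (λ_j − Σ_{k=1}^{m} a_{j,ℑ(k)} ι_k) · η[ℑ] for every j = 1,…,n−1. -/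

import Mathlib

/-!
The operators realise `sl(n)` on `A`: `d_j`, `η_j`, `ζ_j` play the roles of `e_j`, `f_j`, `h_j`.
In the Weyl algebra one computes `[d_j, η_i] = δ_{ij} ζ_j` and `[ζ_j, η_i] = -a_{ji} η_i`; the
second bracket, and the part of the first coming from the leading factor of `d_j`, are cheap
because `ζ_j` and that factor are Euler operators: their bracket with each `x_{a,b}` and each
`∂_{a,b}` is a scalar multiple of it. Now let `v` be killed by every `d_j` with `ζ_j v = μ_j v`. Then `η_i^c v`
has `ζ_j`-weight `μ_j - a_{ji} c`. It is killed by `d_j` for `j ≠ i`, since `d_j` and `η_i`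
commute, and `d_i η_i^c v = c (μ_i - c + 1) η_i^{c-1} v` by the `sl₂` computation. This vanishes
because `c = μ_i + 1`, which is exactly the recursion defining `ι_k`. Starting from `1`, with
`d_j 1 = 0` and `ζ_j 1 = λ_j`, induction along `ℑ` proves the theorem.
-/

open MvPolynomial LieAlgebra LieAlgebra.SpecialLinear

/-- Index set for the variables `x_{i,j}`, `1 ≤ j < i ≤ n`. -/
abbrev XIdx (n : ℕ) := {p : ℕ × ℕ // 1 ≤ p.2 ∧ p.2 < p.1 ∧ p.1 ≤ n}

/-- The polynomial algebra `A = ℂ[x_{i,j} : 1 ≤ j < i ≤ n]`. -/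
abbrev PolyA (n : ℕ) := MvPolynomial (XIdx n) ℂ

/-- Multiplication by `x_{i,j}` as a linear operator on `A`. -/
noncomputable def mulX (n i j : ℕ) : Module.End ℂ (PolyA n) :=
  if h : 1 ≤ j ∧ j < i ∧ i ≤ n then
    LinearMap.mulLeft ℂ (X (⟨(i, j), h⟩ : XIdx n)) else 0

/-- Partial derivative `∂_{i,j}` as a linear operator on `A`. -/
noncomputable def pd (n i j : ℕ) : Module.End ℂ (PolyA n) :=
  if h : 1 ≤ j ∧ j < i ∧ i ≤ n then
    (pderiv (⟨(i, j), h⟩ : XIdx n)).toLinearMap else 0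

/-- The operator `d_i`. -/
noncomputable def dOp (n : ℕ) (lam : ℕ → ℂ) (i : ℕ) : Module.End ℂ (PolyA n) :=
  (lam i • (1 : Module.End ℂ (PolyA n))
      - ∑ j ∈ Finset.Icc (i+1) n, mulX n j i * pd n j i
      + ∑ j ∈ Finset.Icc (i+2) n, mulX n j (i+1) * pd n j (i+1)) * pd n (i+1) i
    + ∑ j ∈ Finset.Icc 1 (i-1), mulX n i j * pd n (i+1) j
    - ∑ j ∈ Finset.Icc (i+2) n, mulX n j (i+1) * pd n j i

/-- The operator `η_i`. -/
noncomputable def etaOp (n : ℕ) (i : ℕ) : Module.End ℂ (PolyA n) :=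
  mulX n (i+1) i + ∑ j ∈ Finset.Icc 1 (i-1), mulX n (i+1) j * pd n i j

/-- The operator `ζ_i`. -/
noncomputable def zetaOp (n : ℕ) (lam : ℕ → ℂ) (i : ℕ) : Module.End ℂ (PolyA n) :=
  lam i • (1 : Module.End ℂ (PolyA n))
    + ∑ p ∈ Finset.Icc 1 (i-1), (mulX n i p * pd n i p - mulX n (i+1) p * pd n (i+1) p)
    + ∑ j ∈ Finset.Icc (i+2) n, (mulX n j (i+1) * pd n j (i+1) - mulX n j i * pd n j i)
    - (2 : ℂ) • (mulX n (i+1) i * pd n (i+1) i)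

/-- The matrix unit `E_{i,j}` (1-based indices) as an element of `sl(n,ℂ)`. -/
noncomputable def slE (n i j : ℕ) : sl (Fin n) ℂ :=
  if h : i ≠ j ∧ 1 ≤ i ∧ i ≤ n ∧ 1 ≤ j ∧ j ≤ n then
    have hi : i - 1 < n := by omega
    have hj : j - 1 < n := by omega
    LieAlgebra.SpecialLinear.single (⟨i - 1, hi⟩ : Fin n) (⟨j - 1, hj⟩ : Fin n)
      (by simp only [ne_eq, Fin.mk.injEq]; omega) (1 : ℂ)
  else 0

/-- `h_i = E_{i,i} - E_{i+1,i+1}` (1-based index) as an element of `sl(n,ℂ)`. -/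
noncomputable def slH (n i : ℕ) : sl (Fin n) ℂ :=
  if h : 1 ≤ i ∧ i + 1 ≤ n then
    have hi : i - 1 < n := by omega
    have hi' : i < n := by omega
    ⟨Matrix.single (⟨i - 1, hi⟩ : Fin n) (⟨i - 1, hi⟩ : Fin n) (1 : ℂ)
        - Matrix.single (⟨i, hi'⟩ : Fin n) (⟨i, hi'⟩ : Fin n) (1 : ℂ),
      LinearMap.mem_ker.2 (by simp)⟩
  else 0

/-- The `(l,i)` entry of the Cartan matrix of `sl(n)`. -/
noncomputable def cartan (l i : ℕ) : ℂ :=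
  if l = i then 2 else if l = i + 1 ∨ i = l + 1 then -1 else 0

/-- The recursively defined exponents `ι_k = λ_{ℑ(k)} + 1 − Σ_{p=1}^{k-1} a_{ℑ(k),ℑ(p)} ι_p`. -/
noncomputable def iotaSeq (lam : ℕ → ℂ) (Im : ℕ → ℕ) : ℕ → ℂ
  | k =>
    lam (Im k) + 1 -
      ∑ p ∈ (Finset.Icc 1 (k - 1)).attach,
        cartan (Im k) (Im p.1) * iotaSeq lam Im p.1
  decreasing_by
    have := Finset.mem_Icc.1 p.2; omega

theorem MvPolynomial.pderiv_pderiv_comm {R σ : Type*} [CommSemiring R] (i j : σ)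
    (p : MvPolynomial σ R) : pderiv i (pderiv j p) = pderiv j (pderiv i p) := by
  classical
  induction p using MvPolynomial.induction_on with
  | C a => simp
  | add p q hp hq => simp [hp, hq]
  | mul_X p k hp =>
    simp only [pderiv_mul, pderiv_X, map_add, hp, Pi.single_apply]
    split_ifs <;> simp only [pderiv_one, map_zero, mul_zero, mul_one, add_zero]
    ring

/- Mathlib's `add_lie`, `lie_sum`, `smul_lie`, `sub_smul`, `mul_neg`, … do not fire on
`Module.End ℂ (PolyA n)`: the instances they synthesize agree with those of the definitions above
only after unfolding. Hence the bracket rules below for associative rings, `PolyA.smul_lie` and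
`PolyA.sub_smul`; negation of operators is avoided throughout. -/
section RingLie
variable {A : Type*} [Ring A]

theorem Ring.add_lie (a b c : A) : ⁅a + b, c⁆ = ⁅a, c⁆ + ⁅b, c⁆ := by
  simp only [Ring.lie_def, add_mul, mul_add]; abel

theorem Ring.sub_lie (a b c : A) : ⁅a - b, c⁆ = ⁅a, c⁆ - ⁅b, c⁆ := by
  simp only [Ring.lie_def, sub_mul, mul_sub]; abel

theorem Ring.lie_add (a b c : A) : ⁅a, b + c⁆ = ⁅a, b⁆ + ⁅a, c⁆ := by
  simp only [Ring.lie_def, add_mul, mul_add]; abel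

theorem Ring.sum_lie {ι : Type*} (s : Finset ι) (f : ι → A) (c : A) :
    ⁅∑ i ∈ s, f i, c⁆ = ∑ i ∈ s, ⁅f i, c⁆ := by
  simp only [Ring.lie_def, Finset.sum_mul, Finset.mul_sum, Finset.sum_sub_distrib]

theorem Ring.lie_sum {ι : Type*} (s : Finset ι) (f : ι → A) (c : A) :
    ⁅c, ∑ i ∈ s, f i⁆ = ∑ i ∈ s, ⁅c, f i⁆ := by
  simp only [Ring.lie_def, Finset.sum_mul, Finset.mul_sum, Finset.sum_sub_distrib]

theorem Ring.one_lie (a : A) : ⁅(1 : A), a⁆ = 0 := by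
  rw [Ring.lie_def, one_mul, mul_one, sub_self]

theorem Ring.lie_mul_right (a b c : A) : ⁅a, b * c⁆ = ⁅a, b⁆ * c + b * ⁅a, c⁆ := by
  simp only [Ring.lie_def, mul_sub, sub_mul, mul_assoc]; abel

theorem Ring.lie_mul_left (a b c : A) : ⁅a * b, c⁆ = a * ⁅b, c⁆ + ⁅a, c⁆ * b := by
  simp only [Ring.lie_def, mul_sub, sub_mul, mul_assoc]; abel

end RingLie

section Weyl
variable {n : ℕ}

theorem PolyA.smul_lie (r : ℂ) (a b : Module.End ℂ (PolyA n)) : ⁅r • a, b⁆ = r • ⁅a, b⁆ := by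
  rw [Ring.lie_def, Ring.lie_def, smul_mul_assoc, mul_smul_comm, smul_sub]

theorem PolyA.sub_smul (r s : ℂ) (T : Module.End ℂ (PolyA n)) : (r - s) • T = r • T - s • T := by
  module

theorem mulX_eq_zero {i j : ℕ} (h : ¬ (1 ≤ j ∧ j < i ∧ i ≤ n)) : mulX n i j = 0 := dif_neg h

theorem pd_eq_zero {i j : ℕ} (h : ¬ (1 ≤ j ∧ j < i ∧ i ≤ n)) : pd n i j = 0 := dif_neg h

theorem pd_apply_one (a b : ℕ) : pd n a b 1 = 0 := by
  unfold pd
  split_ifs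
  · exact pderiv_one
  · rfl

theorem commute_mulX_mulX (a b c d : ℕ) : Commute (mulX n a b) (mulX n c d) := by
  unfold mulX
  split_ifs
  · exact LinearMap.ext fun p ↦ by simp only [Module.End.mul_apply, LinearMap.mulLeft_apply]; ring
  all_goals simp only [Commute.zero_left, Commute.zero_right]

theorem commute_pd_pd (a b c d : ℕ) : Commute (pd n a b) (pd n c d) := by
  unfold pd
  split_ifs
  · exact LinearMap.ext fun p ↦ MvPolynomial.pderiv_pderiv_comm ..
  all_goals simp only [Commute.zero_left, Commute.zero_right]

theorem lie_pd_mulX (a b c d : ℕ) :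
    ⁅pd n a b, mulX n c d⁆ = if (a, b) = (c, d) ∧ 1 ≤ b ∧ b < a ∧ a ≤ n then 1 else 0 := by
  by_cases hab : 1 ≤ b ∧ b < a ∧ a ≤ n
  · by_cases hcd : 1 ≤ d ∧ d < c ∧ c ≤ n
    · simp only [pd, mulX, dif_pos hab, dif_pos hcd, Ring.lie_def]
      refine LinearMap.ext fun p ↦ ?_
      simp only [LinearMap.sub_apply, Module.End.mul_apply, LinearMap.mulLeft_apply,
        Derivation.coeFn_coe, pderiv_mul, pderiv_X, Pi.single_apply, Subtype.mk.injEq]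
      split_ifs <;> simp_all
    · rw [mulX_eq_zero hcd, if_neg]
      · simp [Ring.lie_def]
      rintro ⟨h, -⟩
      exact hcd (by simp_all)
  · rw [pd_eq_zero hab, if_neg (by tauto)]
    simp [Ring.lie_def]

theorem lie_mulX_pd_mulX (a b c d e f : ℕ) :
    ⁅mulX n a b * pd n c d, mulX n e f⁆
      = if (c, d) = (e, f) ∧ 1 ≤ d ∧ d < c ∧ c ≤ n then mulX n a b else 0 := by
  rw [Ring.lie_mul_left, lie_pd_mulX, commute_iff_lie_eq.1 (commute_mulX_mulX ..), zero_mul,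
    add_zero, mul_ite, mul_one, mul_zero]

theorem lie_pd_mulX_pd (a b c d e f : ℕ) :
    ⁅pd n a b, mulX n c d * pd n e f⁆
      = if (a, b) = (c, d) ∧ 1 ≤ b ∧ b < a ∧ a ≤ n then pd n e f else 0 := by
  rw [Ring.lie_mul_right, lie_pd_mulX, commute_iff_lie_eq.1 (commute_pd_pd ..), mul_zero,
    add_zero, ite_mul, one_mul, zero_mul]

theorem lie_mulX_pd_pd (a b c d e f : ℕ) :
    ⁅mulX n a b * pd n c d, pd n e f⁆
      = (if (e, f) = (a, b) ∧ 1 ≤ f ∧ f < e ∧ e ≤ n then -1 else 0 : ℂ) • pd n c d := by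
  have skew : ⁅mulX n a b, pd n e f⁆ = (-1 : ℂ) • ⁅pd n e f, mulX n a b⁆ := by
    rw [Ring.lie_def, Ring.lie_def]; module
  rw [Ring.lie_mul_left, commute_iff_lie_eq.1 (commute_pd_pd ..), skew, lie_pd_mulX]
  split_ifs <;> simp only [mul_zero, zero_add, smul_mul_assoc, one_mul, smul_zero, zero_mul,
    zero_smul]

theorem lie_mulX_pd_mulX_pd (a b c d e f g h : ℕ) :
    ⁅mulX n a b * pd n c d, mulX n e f * pd n g h⁆
      = (if (c, d) = (e, f) ∧ 1 ≤ d ∧ d < c ∧ c ≤ n then mulX n a b * pd n g h else 0)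
        - if (g, h) = (a, b) ∧ 1 ≤ h ∧ h < g ∧ g ≤ n then mulX n e f * pd n c d else 0 := by
  rw [Ring.lie_mul_right, lie_mulX_pd_mulX, lie_mulX_pd_pd]
  split_ifs <;> simp only [mul_smul_comm, zero_mul, mul_zero, zero_smul] <;> module

theorem lie_mulX_pd_self_mulX (a b c d : ℕ) :
    ⁅mulX n a b * pd n a b, mulX n c d⁆ = (if (a, b) = (c, d) then 1 else 0 : ℂ) • mulX n c d := by
  rw [lie_mulX_pd_mulX]
  by_cases h : (a, b) = (c, d)
  · obtain ⟨rfl, rfl⟩ := Prod.mk.inj h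
    by_cases hab : 1 ≤ b ∧ b < a ∧ a ≤ n
    · simp [hab]
    · simp [hab, mulX_eq_zero hab]
  · simp [h]

theorem lie_mulX_pd_self_pd (a b c d : ℕ) :
    ⁅mulX n a b * pd n a b, pd n c d⁆ = (if (a, b) = (c, d) then -1 else 0 : ℂ) • pd n c d := by
  rw [lie_mulX_pd_pd]
  by_cases h : (a, b) = (c, d)
  · obtain ⟨rfl, rfl⟩ := Prod.mk.inj h
    by_cases hab : 1 ≤ b ∧ b < a ∧ a ≤ n
    · simp [hab]
    · simp [hab, pd_eq_zero hab]
  · rw [if_neg, if_neg h, zero_smul, zero_smul]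
    rintro ⟨h', -⟩
    exact h h'.symm

end Weyl

/-- `coroot j a = ⟨h_j, ε_a⟩` for `h_j = E_{jj} - E_{j+1,j+1}`, so that the variable `x_{a,b}`
has `ζ_j`-weight `coroot j a - coroot j b`. -/
def coroot (j a : ℕ) : ℂ := if a = j then 1 else if a = j + 1 then -1 else 0

theorem cartan_eq_coroot_sub (j i : ℕ) : cartan j i = coroot j i - coroot j (i + 1) := by
  unfold cartan coroot
  split_ifs <;> first | omega | norm_num

section Zeta
variable {n : ℕ} (lam : ℕ → ℂ) (j : ℕ)

theorem lie_zetaOp_of_lie_mulX_pd_self {T : Module.End ℂ (PolyA n)} {a b : ℕ} {ε : ℂ}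
    (hab : 1 ≤ b ∧ b < a ∧ a ≤ n)
    (hT : ∀ c d, ⁅mulX n c d * pd n c d, T⁆ = (if (c, d) = (a, b) then ε else 0) • T) :
    ⁅zetaOp n lam j, T⁆ = (ε * (coroot j a - coroot j b)) • T := by
  simp only [zetaOp, Ring.add_lie, Ring.sub_lie, Ring.sum_lie, PolyA.smul_lie, Ring.one_lie, hT]
  simp only [← PolyA.sub_smul, ← Finset.sum_smul, smul_smul, ← add_smul, smul_zero, zero_add]
  congr 1
  simp only [Prod.mk.injEq, Finset.sum_sub_distrib, ite_and, Finset.sum_ite_irrel,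
    Finset.sum_ite_eq', Finset.mem_Icc, Finset.sum_const_zero, coroot]
  split_ifs <;> first | omega | ring

theorem lie_zetaOp_mulX (a b : ℕ) :
    ⁅zetaOp n lam j, mulX n a b⁆ = (coroot j a - coroot j b) • mulX n a b := by
  by_cases hab : 1 ≤ b ∧ b < a ∧ a ≤ n
  · simpa using lie_zetaOp_of_lie_mulX_pd_self lam j hab fun c d ↦ lie_mulX_pd_self_mulX c d a b
  · simp [mulX_eq_zero hab, Ring.lie_def]

theorem lie_zetaOp_pd (a b : ℕ) :
    ⁅zetaOp n lam j, pd n a b⁆ = (coroot j b - coroot j a) • pd n a b := by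
  by_cases hab : 1 ≤ b ∧ b < a ∧ a ≤ n
  · simpa using lie_zetaOp_of_lie_mulX_pd_self lam j hab fun c d ↦ lie_mulX_pd_self_pd c d a b
  · simp [pd_eq_zero hab, Ring.lie_def]

theorem lie_zetaOp_mulX_pd (a b c d : ℕ) :
    ⁅zetaOp n lam j, mulX n a b * pd n c d⁆
      = (coroot j a - coroot j b - (coroot j c - coroot j d)) • (mulX n a b * pd n c d) := by
  rw [Ring.lie_mul_right, lie_zetaOp_mulX, lie_zetaOp_pd, smul_mul_assoc, mul_smul_comm,
    ← add_smul]
  congr 1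
  ring

theorem lie_zetaOp_etaOp (i : ℕ) :
    ⁅zetaOp n lam j, etaOp n i⁆ = (-cartan j i) • etaOp n i := by
  simp only [etaOp, Ring.lie_add, Ring.lie_sum, lie_zetaOp_mulX, lie_zetaOp_mulX_pd, smul_add,
    Finset.smul_sum, cartan_eq_coroot_sub]
  congr 1
  · congr 1
    ring
  · refine Finset.sum_congr rfl fun q _ ↦ ?_
    congr 1
    ring

theorem zetaOp_apply_one : zetaOp n lam j 1 = lam j • 1 := by
  simp [zetaOp, pd_apply_one]

end Zeta

noncomputable def dOpFactor (n : ℕ) (lam : ℕ → ℂ) (j : ℕ) : Module.End ℂ (PolyA n) :=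
  lam j • 1 - ∑ p ∈ Finset.Icc (j + 1) n, mulX n p j * pd n p j
    + ∑ p ∈ Finset.Icc (j + 2) n, mulX n p (j + 1) * pd n p (j + 1)

section DOp
variable {n : ℕ} (lam : ℕ → ℂ) (j : ℕ) {i : ℕ}

theorem dOp_eq : dOp n lam j = dOpFactor n lam j * pd n (j + 1) j
    + ∑ p ∈ Finset.Icc 1 (j - 1), mulX n j p * pd n (j + 1) p
    - ∑ p ∈ Finset.Icc (j + 2) n, mulX n p (j + 1) * pd n p j := rfl

theorem dOp_apply_one : dOp n lam j 1 = 0 := by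
  simp [dOp, pd_apply_one]

theorem lie_dOpFactor_of_lie_mulX_pd_self {T : Module.End ℂ (PolyA n)} {a b : ℕ} {ε : ℂ}
    (hab : 1 ≤ b ∧ b < a ∧ a ≤ n)
    (hT : ∀ c d, ⁅mulX n c d * pd n c d, T⁆ = (if (c, d) = (a, b) then ε else 0) • T) :
    ⁅dOpFactor n lam j, T⁆ = (-ε * coroot j b) • T := by
  rw [dOpFactor, sub_add_eq_add_sub, add_sub_assoc]
  simp only [Ring.add_lie, Ring.sub_lie, Ring.sum_lie, PolyA.smul_lie, Ring.one_lie, hT]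
  simp only [← PolyA.sub_smul, ← Finset.sum_smul, smul_zero, zero_add]
  congr 1
  simp only [Prod.mk.injEq, ite_and, Finset.sum_ite_eq', Finset.mem_Icc, coroot]
  split_ifs <;> first | omega | ring

theorem lie_dOpFactor_mulX (a b : ℕ) :
    ⁅dOpFactor n lam j, mulX n a b⁆ = (-coroot j b) • mulX n a b := by
  by_cases hab : 1 ≤ b ∧ b < a ∧ a ≤ n
  · simpa using lie_dOpFactor_of_lie_mulX_pd_self lam j hab fun c d ↦ lie_mulX_pd_self_mulX c d a b
  · simp [mulX_eq_zero hab, Ring.lie_def]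

theorem lie_dOpFactor_pd (a b : ℕ) :
    ⁅dOpFactor n lam j, pd n a b⁆ = coroot j b • pd n a b := by
  by_cases hab : 1 ≤ b ∧ b < a ∧ a ≤ n
  · simpa using lie_dOpFactor_of_lie_mulX_pd_self lam j hab fun c d ↦ lie_mulX_pd_self_pd c d a b
  · simp [pd_eq_zero hab, Ring.lie_def]

theorem lie_dOpFactor_etaOp :
    ⁅dOpFactor n lam j, etaOp n i⁆ = (-coroot j i) • mulX n (i + 1) i := by
  simp only [etaOp, Ring.lie_add, Ring.lie_sum, Ring.lie_mul_right, lie_dOpFactor_mulX,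
    lie_dOpFactor_pd, smul_mul_assoc, mul_smul_comm, ← add_smul, neg_add_cancel, zero_smul,
    Finset.sum_const_zero, add_zero]

theorem lie_pd_etaOp (hj : 1 ≤ j) (hjn : j + 1 ≤ n) :
    ⁅pd n (j + 1) j, etaOp n i⁆ = if i = j then 1 else 0 := by
  simp only [etaOp, Ring.lie_add, Ring.lie_sum, lie_pd_mulX, lie_pd_mulX_pd, Prod.mk.injEq]
  rw [Finset.sum_eq_zero fun q hq ↦ if_neg (by rw [Finset.mem_Icc] at hq; omega), add_zero]
  split_ifs <;> first | rfl | omega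

theorem lie_sum_rowShift_etaOp (hjn : j + 1 ≤ n) :
    ⁅∑ p ∈ Finset.Icc 1 (j - 1), mulX n j p * pd n (j + 1) p, etaOp n i⁆
      = if i = j then ∑ p ∈ Finset.Icc 1 (j - 1),
          (mulX n j p * pd n j p - mulX n (j + 1) p * pd n (j + 1) p) else 0 := by
  by_cases hij : i = j
  · subst hij
    simp only [etaOp, Ring.lie_add, Ring.lie_sum, Ring.sum_lie, lie_mulX_pd_mulX,
      lie_mulX_pd_mulX_pd, Prod.mk.injEq, ite_and, Finset.sum_ite_eq', Finset.sum_ite_eq,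
      Finset.mem_Icc, Finset.sum_sub_distrib, if_true]
    rw [ite_eq_right_iff.2 fun _ ↦ if_neg (by omega), zero_add]
    congr 1 <;> refine Finset.sum_congr rfl fun q hq ↦ ?_ <;> rw [Finset.mem_Icc] at hq <;>
      split_ifs <;> first | rfl | omega
  · simp only [etaOp, Ring.lie_add, Ring.lie_sum, Ring.sum_lie, lie_mulX_pd_mulX,
      lie_mulX_pd_mulX_pd, Prod.mk.injEq, add_left_inj, hij, Ne.symm hij, false_and, if_false,
      Finset.sum_const_zero, sub_zero, add_zero]

theorem lie_sum_colShift_etaOp (hj : 1 ≤ j) (hin : i + 1 ≤ n) :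
    ⁅∑ p ∈ Finset.Icc (j + 2) n, mulX n p (j + 1) * pd n p j, etaOp n i⁆
      = if i = j + 1 then mulX n (i + 1) i * pd n i j else 0 := by
  simp only [etaOp, Ring.lie_add, Ring.lie_sum, Ring.sum_lie, lie_mulX_pd_mulX,
    lie_mulX_pd_mulX_pd, Prod.mk.injEq, ite_and, Finset.sum_ite_irrel, Finset.sum_ite_eq',
    Finset.sum_ite_eq, Finset.mem_Icc, Finset.sum_const_zero, Finset.sum_sub_distrib]
  by_cases hij : i = j + 1
  · subst hij
    simp [hj, show j + 1 < n by omega]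
  · split_ifs <;> first | omega | simp

theorem lie_dOp_etaOp (hj : 1 ≤ j) (hjn : j + 1 ≤ n) (hin : i + 1 ≤ n) :
    ⁅dOp n lam j, etaOp n i⁆ = if i = j then zetaOp n lam j else 0 := by
  rw [dOp_eq, Ring.sub_lie, Ring.add_lie, Ring.lie_mul_left, lie_pd_etaOp j hj hjn,
    lie_dOpFactor_etaOp, lie_sum_rowShift_etaOp j hjn, lie_sum_colShift_etaOp j hj hin]
  by_cases hij : i = j
  · subst hij
    simp only [if_true, mul_one, show i ≠ i + 1 by omega, if_false, sub_zero, coroot,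
      smul_mul_assoc]
    rw [dOpFactor, zetaOp, ← Finset.add_sum_Ioc_eq_sum_Icc hjn, ← Finset.Icc_add_one_left_eq_Ioc]
    simp only [Finset.sum_sub_distrib]
    module
  · by_cases hij' : i = j + 1
    · subst hij'
      simp only [hij, if_false, mul_zero, zero_add, add_zero, if_true, coroot, smul_mul_assoc]
      module
    · simp [hij, hij', coroot]

end DOp

section Sl2
variable {R M : Type*} [CommRing R] [AddCommGroup M] [Module R M]

theorem Module.End.apply_pow_apply_of_lie_eq_smul {h f : Module.End R M} {a μ : R}
    (hhf : ⁅h, f⁆ = a • f) {v : M} (hv : h v = μ • v) (c : ℕ) :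
    h ((f ^ c) v) = (μ + c * a) • (f ^ c) v := by
  induction c with
  | zero => simpa using hv
  | succ c ih =>
    have hcomm : h * f = f * h + a • f := by rw [← hhf, Ring.lie_def]; abel
    rw [pow_succ', Module.End.mul_apply, ← Module.End.mul_apply h, hcomm, LinearMap.add_apply,
      Module.End.mul_apply, ih, LinearMap.smul_apply, map_smul, ← add_smul]
    push_cast
    ring_nf

theorem Module.End.apply_pow_succ_apply_of_lie_eq {e f h : Module.End R M} (hef : ⁅e, f⁆ = h)
    (hhf : ⁅h, f⁆ = (-2 : R) • f) {v : M} {μ : R} (he : e v = 0) (hh : h v = μ • v) (c : ℕ) :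
    e ((f ^ (c + 1)) v) = ((c + 1) * (μ - c)) • (f ^ c) v := by
  have hcomm : e * f = f * e + h := by rw [← hef, Ring.lie_def]; abel
  induction c with
  | zero => simp [← Module.End.mul_apply e, hcomm, he, hh]
  | succ c ih =>
    rw [pow_succ' f (c + 1), Module.End.mul_apply, ← Module.End.mul_apply e, hcomm,
      LinearMap.add_apply, Module.End.mul_apply, ih, map_smul,
      Module.End.apply_pow_apply_of_lie_eq_smul hhf hh, ← Module.End.mul_apply f, ← pow_succ',
      ← add_smul]
    push_cast
    ring_nf

end Sl2

def IsWeightedSolution (n : ℕ) (lam μ : ℕ → ℂ) (v : PolyA n) : Prop :=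
  ∀ j, 1 ≤ j → j + 1 ≤ n → dOp n lam j v = 0 ∧ zetaOp n lam j v = μ j • v

namespace IsWeightedSolution
variable {n : ℕ} {lam μ : ℕ → ℂ} {v : PolyA n}

theorem one : IsWeightedSolution n lam lam 1 :=
  fun j _ _ ↦ ⟨dOp_apply_one lam j, zetaOp_apply_one lam j⟩

theorem etaOp_pow (hv : IsWeightedSolution n lam μ v) {i c : ℕ} (hi : 1 ≤ i) (hin : i + 1 ≤ n)
    (hc : (c : ℂ) = μ i + 1) :
    IsWeightedSolution n lam (fun j ↦ μ j - cartan j i * c) ((etaOp n i ^ c) v) := by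
  intro j hj hjn
  obtain ⟨hdj, hzj⟩ := hv j hj hjn
  refine ⟨?_, ?_⟩
  · by_cases hij : i = j
    · subst hij
      obtain _ | c := c
      · simpa using hdj
      rw [Module.End.apply_pow_succ_apply_of_lie_eq
        (by rw [lie_dOp_etaOp lam i hi hjn hin, if_pos rfl])
        (by rw [lie_zetaOp_etaOp, cartan, if_pos rfl]) hdj hzj c]
      push_cast at hc
      rw [show μ i - c = 0 by linear_combination -hc, mul_zero, zero_smul]
    · have hcomm : Commute (dOp n lam j) (etaOp n i ^ c) :=
        (commute_iff_lie_eq.2 (by rw [lie_dOp_etaOp lam j hj hjn hin, if_neg hij])).pow_right c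
      rw [← Module.End.mul_apply, hcomm.eq, Module.End.mul_apply, hdj, map_zero]
  · rw [Module.End.apply_pow_apply_of_lie_eq_smul (lie_zetaOp_etaOp lam j i) hzj]
    ring_nf

end IsWeightedSolution

theorem iotaSeq_succ (lam : ℕ → ℂ) (Im : ℕ → ℕ) (k : ℕ) :
    iotaSeq lam Im (k + 1)
      = lam (Im (k + 1)) - ∑ p ∈ Finset.Icc 1 k, cartan (Im (k + 1)) (Im p) * iotaSeq lam Im p
        + 1 := by
  rw [iotaSeq, Finset.sum_attach (Finset.Icc 1 (k + 1 - 1))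
    (fun p ↦ cartan (Im (k + 1)) (Im p) * iotaSeq lam Im p), Nat.add_sub_cancel]
  ring

/-- `c k` is `ι_k` as a natural number and `w k = η_{ℑ(k)}^{ι_k} ∘ ⋯ ∘ η_{ℑ(1)}^{ι_1}(1)`. -/
theorem statement7_general (n : ℕ) (lam : ℕ → ℂ)
    (m : ℕ) (Im : ℕ → ℕ)
    (hIm : ∀ k, 1 ≤ k → k ≤ m → 1 ≤ Im k ∧ Im k ≤ n - 1)
    (c : ℕ → ℕ) (hc : ∀ k, 1 ≤ k → k ≤ m → iotaSeq lam Im k = (c k : ℂ))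
    (w : ℕ → PolyA n) (hw0 : w 0 = 1)
    (hw : ∀ k, k < m → w (k + 1) = (etaOp n (Im (k + 1)) ^ c (k + 1)) (w k)) :
    ∀ j, 1 ≤ j → j ≤ n - 1 →
      dOp n lam j (w m) = 0 ∧
      zetaOp n lam j (w m)
        = (lam j - ∑ k ∈ Finset.Icc 1 m, cartan j (Im k) * iotaSeq lam Im k) • w m := by
  have key : ∀ k ≤ m, IsWeightedSolution n lam
      (fun j ↦ lam j - ∑ p ∈ Finset.Icc 1 k, cartan j (Im p) * iotaSeq lam Im p) (w k) := by
    intro k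
    induction k with
    | zero =>
      intro _
      simpa [hw0] using IsWeightedSolution.one (n := n) (lam := lam)
    | succ k ih =>
      intro hk
      obtain ⟨hi, hin⟩ := hIm (k + 1) (by omega) hk
      have hck := hc (k + 1) (by omega) hk
      rw [hw k hk]
      convert (ih (by omega)).etaOp_pow hi (by omega) (by rw [← hck, iotaSeq_succ]) using 2 with j
      rw [Finset.sum_Icc_succ_top (by omega), hck]
      ring
  intro j hj hjn
  exact key m le_rfl j hj (by omega)

/-- Theorem 2.4: for a map `ℑ : {1,…,m} → {1,…,n−1}` with `ℑ(k) ≠ ℑ(k+1)` whose associated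
exponents `ι_k` are all nonnegative integers `c k`, the element
`η[ℑ] = η_{ℑ(m)}^{ι_m} ∘ ⋯ ∘ η_{ℑ(1)}^{ι_1}(1)` (encoded by the iteration `w`) is a weighted
solution of the system: `d_j(η[ℑ]) = 0` and
`ζ_j(η[ℑ]) = (λ_j − Σ_{k=1}^m a_{j,ℑ(k)} ι_k)·η[ℑ]` for all `j = 1,…,n−1`. -/
theorem statement7 (n : ℕ) (hn : 2 ≤ n) (lam : ℕ → ℂ)
    (m : ℕ) (hm : 1 ≤ m) (Im : ℕ → ℕ)
    (hIm : ∀ k, 1 ≤ k → k ≤ m → 1 ≤ Im k ∧ Im k ≤ n - 1)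
    (hIm' : ∀ k, 1 ≤ k → k ≤ m - 1 → Im k ≠ Im (k + 1))
    (c : ℕ → ℕ) (hc : ∀ k, 1 ≤ k → k ≤ m → iotaSeq lam Im k = (c k : ℂ))
    (w : ℕ → PolyA n) (hw0 : w 0 = 1)
    (hw : ∀ k, k < m → w (k + 1) = (etaOp n (Im (k + 1)) ^ c (k + 1)) (w k)) :
    ∀ j, 1 ≤ j → j ≤ n - 1 →
      dOp n lam j (w m) = 0 ∧
      zetaOp n lam j (w m)
        = (lam j - ∑ k ∈ Finset.Icc 1 m, cartan j (Im k) * iotaSeq lam Im k) • w m :=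
  statement7_general n lam m Im hIm c hc w hw0 hw
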